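/- Let Γ be a discrete, cocompact, torsion-free subgroup of SL(2,ℝ) and Λ = Γ•o. Then the setwise stabilizer S = {g ∈ SL(2,ℝ) : g•Λ = Λ} is a discrete subgroup of SL(2,ℝ); in particular S acts properly discontinuously on ℍ. -/

import Mathlib

noncomputable section

open UpperHalfPlane MeasureTheory Topology Filter Metric Set Pointwise

local notation "SL2R" => Matrix.SpecialLinearGroup (Fin 2) ℝ

/-- The matrix topology on `SL(2,ℝ)`, induced from the space of `2 × 2` real matrices. -/
instance : TopologicalSpace SL2R :=
  TopologicalSpace.induced (fun g => (g : Matrix (Fin 2) (Fin 2) ℝ)) inferInstance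

/-- The basepoint `o = i` of the upper half-plane. -/
def o : ℍ := UpperHalfPlane.I

/-- A subgroup of `SL(2,ℝ)` is cocompact if the translates of some compact set cover `ℍ`. -/
def IsCocompact (Γ : Subgroup SL2R) : Prop :=
  ∃ K : Set ℍ, IsCompact K ∧ ⋃ γ : Γ, (γ : SL2R) • K = Set.univ

/-- The orbit `Λ = Γ • o` of the basepoint. -/
def orbitO (Γ : Subgroup SL2R) : Set ℍ := {z : ℍ | ∃ γ ∈ Γ, γ • o = z}

/-- The focal counting function `υ(z) = #{λ ∈ Λ | λ ≠ o, d(z,λ) = d(z,o)}`. -/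
def upsilon (Γ : Subgroup SL2R) (z : ℍ) : ℕ :=
  {l : ℍ | l ∈ orbitO Γ ∧ l ≠ o ∧ dist z l = dist z o}.ncard

/-- The Brillouin index `B(z) = #{λ ∈ Λ | d(z,λ) ≤ d(z,o)}`. -/
def brillouinIndex (Γ : Subgroup SL2R) (z : ℍ) : ℕ :=
  {l : ℍ | l ∈ orbitO Γ ∧ dist z l ≤ dist z o}.ncard

/-- The `k`-th Brillouin set `B_k = {z | B(z) = k}`. -/
def brillouinSet (Γ : Subgroup SL2R) (k : ℕ) : Set ℍ := {z : ℍ | brillouinIndex Γ z = k}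

/-- The perpendicular bisector `L_λ = {z | d(z,o) = d(z,λ)}`. -/
def bisector (l : ℍ) : Set ℍ := {z : ℍ | dist z o = dist z l}

/-- A monoid is torsion-free if its only element of finite order is the identity
(the definition `Monoid.IsTorsionFree` of the older Mathlib, since removed). -/
def Monoid.IsTorsionFree (G : Type*) [Monoid G] : Prop :=
  ∀ g : G, g ≠ 1 → ¬IsOfFinOrder g

/-!
Since `Γ` is discrete it acts properly discontinuously on `ℍ`, so `Λ` meets every compact set in
finitely many points, and cocompactness forces `Λ` to contain a point `l ≠ o`. An element `g` of
the stabilizer of `Λ` is determined, up to the finite centre `{±1}`, by the pair `(g • o, g • l)`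
of points of `Λ`, which lie at the fixed distance `d(o, l)` from each other. Hence only finitely
many elements of the stabilizer move `o` into a given compact set, so the stabilizer is discrete,
and discrete subgroups of `SL(2,ℝ)` act properly discontinuously on `ℍ`.
-/

/- The topology on `SL2R` above is definitionally Mathlib's `Matrix.SpecialLinearGroup`
topology, but not at instance transparency, so the instances needed here are restated. -/
instance : T1Space SL2R := Matrix.SpecialLinearGroup.instT1Space

instance : ContinuousSMul SL2R ℍ := UpperHalfPlane.instContinuousSMulSL2R

lemma properlyDiscontinuousSMul_of_discreteTopology (Γ : Subgroup SL2R)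
    (hdisc : DiscreteTopology Γ) : ProperlyDiscontinuousSMul Γ ℍ :=
  @UpperHalfPlane.instProperlyDiscontinuousSL2RSubgroup Γ hdisc

lemma Matrix.SpecialLinearGroup.finite_center {n R : Type*} [DecidableEq n] [Fintype n]
    [Nonempty n] [CommRing R] [IsDomain R] :
    (Subgroup.center (SpecialLinearGroup n R) : Set (SpecialLinearGroup n R)).Finite :=
  have : NeZero (Fintype.card n) := ⟨Fintype.card_ne_zero⟩
  Set.finite_coe_iff.mp <|
    .of_equiv _ (center_equiv_rootsOfUnity' (Classical.arbitrary n)).symm.toEquiv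

/- A non-central element of `SL(2,ℝ)` fixing a point of `ℍ` is elliptic, and an elliptic
element has a unique fixed point. -/
lemma mem_center_of_smul_eq_self_of_smul_eq_self {g : SL2R} {z w : ℍ} (hzw : z ≠ w)
    (hz : g • z = z) (hw : g • w = w) : g ∈ Subgroup.center SL2R := by
  set G := Matrix.SpecialLinearGroup.mapGL ℝ g
  have hdet : 0 < G.val.det := by simp [G]
  by_contra hg
  have hG : G ∉ Subgroup.center (GL (Fin 2) ℝ) := fun hG => hg <|
    Subgroup.mem_center_iff.mpr fun h => Matrix.SpecialLinearGroup.mapGL_injective (S := ℝ) <| by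
      simpa using Subgroup.mem_center_iff.mp hG (Matrix.SpecialLinearGroup.mapGL ℝ h)
  have hell := isElliptic_of_exists_smul_eq_self hdet hG ⟨z, hz⟩
  change G • z = z at hz
  change G • w = w at hw
  rw [gl_smul_eq_self_iff_eq_fixedPt hdet hell] at hz hw
  exact hzw (hz.trans hw.symm)

lemma finite_setOf_smul_eq_and_smul_eq {z w : ℍ} (hzw : z ≠ w) (p q : ℍ) :
    {g : SL2R | g • z = p ∧ g • w = q}.Finite := by
  rcases Set.eq_empty_or_nonempty {g : SL2R | g • z = p ∧ g • w = q} with he | ⟨h, hhz, hhw⟩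
  · simp [he]
  refine (Matrix.SpecialLinearGroup.finite_center.image (h * ·)).subset
    fun g ⟨hgz, hgw⟩ => ⟨h⁻¹ * g, ?_, mul_inv_cancel_left h g⟩
  refine mem_center_of_smul_eq_self_of_smul_eq_self hzw ?_ ?_ <;>
    simp [mul_smul, hgz, hgw, hhz, hhw, inv_smul_eq_iff]

lemma ProperlyDiscontinuousSMul.finite_orbit_inter {G X : Type*} [Group G] [TopologicalSpace X]
    [MulAction G X] [ProperlyDiscontinuousSMul G X] (x : X) {K : Set X} (hK : IsCompact K) :
    (MulAction.orbit G x ∩ K).Finite := by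
  refine ((ProperlyDiscontinuousSMul.finite_disjoint_inter_image isCompact_singleton hK
    (K := {x})).image fun γ : G => γ • x).subset ?_
  rintro _ ⟨⟨γ, rfl⟩, hγ⟩
  exact ⟨γ, ⟨γ • x, ⟨x, rfl, rfl⟩, hγ⟩, rfl⟩

lemma orbitO_eq_orbit (Γ : Subgroup SL2R) : orbitO Γ = MulAction.orbit Γ o := by
  ext z
  simp [orbitO, MulAction.mem_orbit_iff, Subgroup.smul_def]

lemma finite_orbitO_inter (Γ : Subgroup SL2R) (hdisc : DiscreteTopology Γ) {K : Set ℍ}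
    (hK : IsCompact K) : (orbitO Γ ∩ K).Finite := by
  have := properlyDiscontinuousSMul_of_discreteTopology Γ hdisc
  rw [orbitO_eq_orbit]
  exact ProperlyDiscontinuousSMul.finite_orbit_inter o hK

lemma finite_setOf_mem_stabilizer_smul_mem {Λ : Set ℍ} (hΛ : ∀ K, IsCompact K → (Λ ∩ K).Finite)
    {z w : ℍ} (hz : z ∈ Λ) (hw : w ∈ Λ) (hzw : z ≠ w) {K : Set ℍ} (hK : IsCompact K) :
    {g : SL2R | g ∈ MulAction.stabilizer SL2R Λ ∧ g • z ∈ K}.Finite := by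
  let K' := cthickening (dist w z) K
  have hpairs : ((Λ ∩ K) ×ˢ (Λ ∩ K')).Finite := (hΛ K hK).prod (hΛ K' hK.cthickening)
  refine (hpairs.preimage' (f := fun g : SL2R => (g • z, g • w)) fun p _ => ?_).subset ?_
  · simpa [Set.preimage, Prod.ext_iff] using finite_setOf_smul_eq_and_smul_eq hzw p.1 p.2
  · rintro g ⟨hg, hgK⟩
    rw [MulAction.mem_stabilizer_iff] at hg
    refine ⟨⟨hg ▸ smul_mem_smul_set hz, hgK⟩, hg ▸ smul_mem_smul_set hw,
      mem_cthickening_of_dist_le _ _ _ _ hgK ?_⟩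
    rw [dist_smul]

lemma discreteTopology_stabilizer {Λ : Set ℍ} (hΛ : ∀ K, IsCompact K → (Λ ∩ K).Finite)
    {z w : ℍ} (hz : z ∈ Λ) (hw : w ∈ Λ) (hzw : z ≠ w) :
    DiscreteTopology (MulAction.stabilizer SL2R Λ) := by
  refine Continuous.discrete_of_tendsto_cofinite_cocompact
    (f := fun g : MulAction.stabilizer SL2R Λ => (g : SL2R) • z) (by fun_prop)
    (tendsto_cofinite_cocompact_iff.mpr fun K hK => ?_)
  exact ((finite_setOf_mem_stabilizer_smul_mem hΛ hz hw hzw hK).preimage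
    Subtype.val_injective.injOn).subset fun g hg => ⟨g.2, hg⟩

lemma exists_mem_orbitO_ne_o {Γ : Subgroup SL2R} (hcc : IsCocompact Γ) :
    ∃ l ∈ orbitO Γ, l ≠ o := by
  obtain ⟨K, hK, hcover⟩ := hcc
  by_contra! hfix
  obtain ⟨r, hr⟩ := hK.isBounded.subset_closedBall o
  refine noncompact_univ ℍ ((isCompact_closedBall o r).of_isClosed_subset isClosed_univ
    fun z _ => ?_)
  obtain ⟨_, ⟨γ, rfl⟩, k, hk, rfl⟩ : z ∈ ⋃ γ : Γ, (γ : SL2R) • K := hcover ▸ mem_univ z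
  have hγ : (γ : SL2R) • o = o := hfix _ ⟨γ, γ.2, rfl⟩
  calc dist ((γ : SL2R) • k) o = dist ((γ : SL2R) • k) ((γ : SL2R) • o) := by rw [hγ]
    _ = dist k o := dist_smul _ _ _
    _ ≤ r := hr hk

theorem stabilizer_of_orbit_discrete_general
    (Γ : Subgroup SL2R)
    (hdisc : DiscreteTopology Γ) (hcc : IsCocompact Γ) :
    DiscreteTopology (MulAction.stabilizer SL2R (orbitO Γ)) ∧
      ProperlyDiscontinuousSMul (MulAction.stabilizer SL2R (orbitO Γ)) ℍ := by
  obtain ⟨l, hl, hlo⟩ := exists_mem_orbitO_ne_o hcc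
  have hS := discreteTopology_stabilizer (fun K hK => finite_orbitO_inter Γ hdisc hK)
    ⟨1, Γ.one_mem, one_smul _ _⟩ hl hlo.symm
  exact ⟨hS, properlyDiscontinuousSMul_of_discreteTopology _ hS⟩

/-- The setwise stabilizer of the orbit `Λ = Γ • o` is a discrete subgroup of `SL(2,ℝ)`;
in particular it acts properly discontinuously on `ℍ`. -/
theorem stabilizer_of_orbit_discrete
    (Γ : Subgroup SL2R)
    (hdisc : DiscreteTopology Γ) (hcc : IsCocompact Γ) (htf : Monoid.IsTorsionFree Γ) :
    DiscreteTopology (MulAction.stabilizer SL2R (orbitO Γ)) ∧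
      ProperlyDiscontinuousSMul (MulAction.stabilizer SL2R (orbitO Γ)) ℍ :=
  stabilizer_of_orbit_discrete_general Γ hdisc hcc
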